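/- arXiv:1411.3601 — 3 statements merged into one kernel-verified Lean document; each statement's English description precedes it below -/
import Mathlib

section
/- The maximum size of a rank-metric code in M_{m×n}(q) with minimum rank distance d (where 1 ≤ d ≤ m ≤ n) is q^{n(m-d+1)}; i.e., any code A ⊆ M_{m×n}(q) such that rank(A - B) ≥ d for all distinct A, B ∈ A satisfies |A| ≤ q^{n(m-d+1)} (the Singleton bound for the rank metric). -/
/-!
Fix any `m - d + 1` rows. Two distinct codewords cannot agree on all of them: otherwise their
difference would be supported on the remaining `d - 1` rows and have rank at most `d - 1`.
So restricting to these rows is injective on the code, whose size is therefore at most the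
number `q ^ (n (m - d + 1))` of matrices with `m - d + 1` rows.
-/

open Finset

namespace Matrix

variable {m n F : Type*} [Fintype m] [Fintype n] [Field F]

theorem rank_le_card_of_row_eq_zero (M : Matrix m n F) (s : Finset m)
    (h : ∀ i ∉ s, M i = 0) : M.rank ≤ #s := by
  classical
  have hrange : Set.range M ⊆ insert 0 (s.image M : Set (n → F)) := by
    rintro _ ⟨i, rfl⟩
    by_cases hi : i ∈ s
    · exact Or.inr (mem_image_of_mem M hi)
    · exact Or.inl (h i hi)
  calc M.rank = Module.finrank F (Submodule.span F (Set.range M)) := M.rank_eq_finrank_span_row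
    _ ≤ Module.finrank F (Submodule.span F (s.image M : Set (n → F))) :=
        Submodule.finrank_mono <| (Submodule.span_mono hrange).trans_eq Submodule.span_insert_zero
    _ ≤ #(s.image M) := finrank_span_finset_le_card _
    _ ≤ #s := card_image_le

variable [DecidableEq m]

theorem injOn_submatrix_of_card_compl_lt_rank (C : Set (Matrix m n F)) (s : Finset m)
    (hC : ∀ A ∈ C, ∀ B ∈ C, A ≠ B → #sᶜ < (A - B).rank) :
    Set.InjOn (fun A : Matrix m n F => A.submatrix ((↑) : s → m) id) C := by
  intro A hA B hB hAB
  by_contra hne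
  have hrows : ∀ i ∉ sᶜ, (A - B) i = 0 := fun i hi => by
    ext j
    simpa [sub_eq_zero] using congrFun (congrFun hAB ⟨i, by simpa using hi⟩) j
  exact (hC A hA B hB hne).not_ge ((A - B).rank_le_card_of_row_eq_zero sᶜ hrows)

variable [Fintype F]

theorem ncard_le_of_card_compl_lt_rank (C : Set (Matrix m n F)) (s : Finset m)
    (hC : ∀ A ∈ C, ∀ B ∈ C, A ≠ B → #sᶜ < (A - B).rank) :
    C.ncard ≤ Fintype.card F ^ (#s * Fintype.card n) := by
  calc C.ncard ≤ (Set.univ : Set (Matrix s n F)).ncard :=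
        Set.ncard_le_ncard_of_injOn _ (fun _ _ => Set.mem_univ _)
          (injOn_submatrix_of_card_compl_lt_rank C s hC) Set.finite_univ
    _ = Fintype.card F ^ (#s * Fintype.card n) := by
        rw [Set.ncard_univ, Matrix, Nat.card_fun, Nat.card_fun, ← pow_mul, mul_comm]
        simp only [Nat.card_eq_fintype_card, Fintype.card_coe]

end Matrix

theorem rank_metric_singleton_bound_general {q m n d : ℕ} (hd : 1 ≤ d) (hdm : d ≤ m)
    {F : Type*} [Field F] [Fintype F] (hF : Fintype.card F = q)
    (C : Set (Matrix (Fin m) (Fin n) F))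
    (hC : ∀ A ∈ C, ∀ B ∈ C, A ≠ B → d ≤ (A - B).rank) :
    C.ncard ≤ q ^ (n * (m - d + 1)) := by
  obtain ⟨s, -, hs⟩ := exists_subset_card_eq (s := (univ : Finset (Fin m))) (n := m - d + 1)
    (by simp only [card_univ, Fintype.card_fin]; omega)
  have hcompl : #sᶜ = d - 1 := by
    rw [card_compl, hs, Fintype.card_fin]
    omega
  have hC' : ∀ A ∈ C, ∀ B ∈ C, A ≠ B → #sᶜ < (A - B).rank := fun A hA B hB hAB => by
    have := hC A hA B hB hAB
    omega
  simpa [hF, hs, mul_comm] using Matrix.ncard_le_of_card_compl_lt_rank C s hC'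

/-- Singleton bound for the rank metric: a code `C ⊆ M_{m×n}(q)` with `1 ≤ d ≤ m ≤ n`
in which any two distinct elements `A, B` satisfy `rank (A - B) ≥ d` has size at most
`q^(n(m-d+1))`. -/
theorem rank_metric_singleton_bound {q m n d : ℕ} (hd : 1 ≤ d) (hdm : d ≤ m) (hmn : m ≤ n)
    {F : Type*} [Field F] [Fintype F] (hF : Fintype.card F = q)
    (C : Set (Matrix (Fin m) (Fin n) F))
    (hC : ∀ A ∈ C, ∀ B ∈ C, A ≠ B → d ≤ (A - B).rank) :
    C.ncard ≤ q ^ (n * (m - d + 1)) :=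
  rank_metric_singleton_bound_general hd hdm hF C hC
end

section
/- For n even, the number of n×n skew-symmetric matrices over GF(q) of full rank n equals q^{n(n-2)/4} · ∏_{i=0}^{(n-2)/2} (q^{2i+1} - 1). -/
/-!
Let `N n` be the number of invertible alternating `n × n` matrices over `F`, `q = #F`.
Count invertible alternating matrices on `Fin 1 ⊕ κ` by their first column `b`, which is
nonzero. Congruence `A ↦ P * A * Pᵀ` with `P = diag(1, Q)` preserves the alternating condition
(it is `v ⬝ᵥ A *ᵥ v = 0` for all `v`, also in characteristic 2) and replaces `b` by `Q *ᵥ b`;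
since `GL` acts transitively on nonzero vectors, every nonzero `b` occurs equally often.
For `b = e₀` the matrix is `[[0, -1, 0], [1, 0, -cᵀ], [0, c, D]]`, whose determinant is `det D`,
so that fibre has `q ^ (n - 2) * N (n - 2)` elements, and
`N n = (q ^ (n - 1) - 1) * q ^ (n - 2) * N (n - 2)`.
-/

open Matrix Finset

namespace Matrix

theorem rank_eq_card_iff_isUnit {K ι : Type*} [Field K] [Fintype ι] [DecidableEq ι]
    (A : Matrix ι ι K) : A.rank = Fintype.card ι ↔ IsUnit A := by
  refine ⟨fun h => ?_, rank_of_isUnit A⟩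
  rw [← mulVec_surjective_iff_isUnit, ← coe_mulVecLin, ← LinearMap.range_eq_top]
  apply Submodule.eq_top_of_finrank_eq
  rw [Module.finrank_fintype_fun_eq_card, ← h]
  rfl

theorem exists_isUnit_mulVec_eq {K ι : Type*} [Field K] [Fintype ι] [DecidableEq ι]
    {v w : ι → K} (hv : v ≠ 0) (hw : w ≠ 0) : ∃ Q : Matrix ι ι K, IsUnit Q ∧ Q *ᵥ v = w := by
  obtain ⟨g, hg⟩ := Submodule.exists_linearEquiv_restrict_eq
    (LinearEquiv.coord K _ v hv ≪≫ₗ LinearEquiv.toSpanNonzeroSingleton K _ w hw)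
  refine ⟨LinearMap.toMatrix' g, LinearMap.isUnit_toMatrix'_iff.mpr
    ((Module.End.isUnit_iff _).mpr g.bijective), ?_⟩
  simpa [LinearEquiv.coord_self] using (hg ⟨v, Submodule.mem_span_singleton_self v⟩).symm

variable {ι κ R : Type*} [CommRing R]

def IsAlt (A : Matrix ι ι R) : Prop := Aᵀ = -A ∧ ∀ i, A i i = 0

theorem IsAlt.submatrix {A : Matrix ι ι R} (hA : A.IsAlt) (f : κ → ι) :
    (A.submatrix f f).IsAlt :=
  ⟨by rw [transpose_submatrix, hA.1]; rfl, fun i => hA.2 (f i)⟩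

theorem IsAlt.apply_swap {A : Matrix ι ι R} (hA : A.IsAlt) (i j : ι) : A j i = -A i j := by
  simpa using congrFun (congrFun hA.1 i) j

theorem IsAlt.dotProduct_mulVec_self [Fintype ι] {A : Matrix ι ι R} (hA : A.IsAlt)
    (v : ι → R) : v ⬝ᵥ A *ᵥ v = 0 := by
  simp only [dotProduct, mulVec, Finset.mul_sum, ← Finset.sum_product']
  -- the terms at `(i, j)` and `(j, i)` cancel, and the diagonal terms vanish
  refine Finset.sum_involution (fun p _ => p.swap) (fun p _ => ?_) (fun p _ hp => ?_)
    (fun _ _ => Finset.mem_univ _) (fun _ _ => rfl)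
  · rw [Prod.fst_swap, Prod.snd_swap, hA.apply_swap]; ring
  · intro h
    have : p.1 = p.2 := congrArg Prod.fst h.symm
    simp [this, hA.2] at hp

theorem IsAlt.mul_mul_transpose [Fintype ι] {A : Matrix ι ι R} (hA : A.IsAlt)
    (P : Matrix κ ι R) : (P * A * Pᵀ).IsAlt := by
  refine ⟨by simp [transpose_mul, hA.1, Matrix.mul_assoc], fun i => ?_⟩
  rw [← hA.dotProduct_mulVec_self (P i), dotProduct_mulVec, mul_apply']
  rfl

def bordered (b : κ → R) (C : Matrix κ κ R) : Matrix (Fin 1 ⊕ κ) (Fin 1 ⊕ κ) R :=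
  fromBlocks 0 (-replicateRow (Fin 1) b) (replicateCol (Fin 1) b) C

def border (A : Matrix (Fin 1 ⊕ κ) (Fin 1 ⊕ κ) R) : κ → R := fun i => A (.inr i) (.inl 0)

theorem isAlt_bordered {C : Matrix κ κ R} (hC : C.IsAlt) (b : κ → R) : (bordered b C).IsAlt := by
  refine ⟨?_, by rintro (i | i) <;> simp [bordered, hC.2]⟩
  rw [bordered, fromBlocks_transpose, hC.1, fromBlocks_neg]
  simp

theorem IsAlt.bordered_border {A : Matrix (Fin 1 ⊕ κ) (Fin 1 ⊕ κ) R} (hA : A.IsAlt) :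
    bordered A.border (A.submatrix .inr .inr) = A := by
  ext (i | i) (j | j)
  · simp [bordered, Fin.fin_one_eq_zero, hA.2]
  · simp [bordered, border, Fin.fin_one_eq_zero, hA.apply_swap (.inl 0)]
  · simp [bordered, border, Fin.fin_one_eq_zero]
  · rfl

theorem border_mul_mul_transpose [Fintype κ] (Q : Matrix κ κ R)
    (A : Matrix (Fin 1 ⊕ κ) (Fin 1 ⊕ κ) R) :
    (fromBlocks 1 0 0 Q * A * (fromBlocks 1 0 0 Q)ᵀ).border = Q *ᵥ A.border := by
  ext i
  simp [border, mul_apply, mulVec, dotProduct, Fintype.sum_sum_type, fromBlocks_transpose]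

theorem IsAlt.border_ne_zero [Nontrivial R] [Fintype κ] [DecidableEq κ]
    {A : Matrix (Fin 1 ⊕ κ) (Fin 1 ⊕ κ) R} (hA : A.IsAlt) (hu : IsUnit A) : A.border ≠ 0 := by
  intro h
  rw [← hA.bordered_border, h] at hu
  have := det_eq_zero_of_row_eq_zero (A := bordered 0 (A.submatrix .inr .inr)) (.inl 0)
    (by rintro (j | j) <;> simp [bordered])
  simp [isUnit_iff_isUnit_det, this] at hu

theorem det_fromBlocks_zero_neg_one_one_zero :
    (fromBlocks 0 (-1) 1 0 : Matrix (Fin 1 ⊕ Fin 1) (Fin 1 ⊕ Fin 1) R).det = 1 := by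
  rw [← det_reindex_self finSumFinEquiv, det_fin_two]
  have h0 : finSumFinEquiv.symm (0 : Fin (1 + 1)) = .inl 0 := finSumFinEquiv_symm_apply_castSucc 0
  have h1 : finSumFinEquiv.symm (1 : Fin (1 + 1)) = .inr 0 := finSumFinEquiv_symm_last
  simp [h0, h1]

theorem det_bordered_single_bordered [Fintype κ] [DecidableEq κ] (c : κ → R)
    (D : Matrix κ κ R) : (bordered (Pi.single (.inl 0) 1) (bordered c D)).det = D.det := by
  set J : Matrix (Fin 1 ⊕ Fin 1) (Fin 1 ⊕ Fin 1) R := fromBlocks 0 (-1) 1 0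
  let _ : Invertible J := ⟨-J, by simp [J, fromBlocks_multiply, fromBlocks_neg],
    by simp [J, fromBlocks_multiply, fromBlocks_neg]⟩
  let e := (Equiv.sumAssoc (Fin 1) (Fin 1) κ).symm
  set M := (bordered (Pi.single (.inl 0) 1) (bordered c D)).reindex e e
  have hM : M = fromBlocks J M.toBlocks₁₂ M.toBlocks₂₁ D := by
    conv_lhs => rw [← fromBlocks_toBlocks M]
    congr 1
    ext (i | i) (j | j) <;> simp [M, e, J, bordered, toBlocks₁₁, Fin.fin_one_eq_zero]
  -- the Schur complement of `J` is `D` itself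
  have hSchur : M.toBlocks₂₁ * ⅟J * M.toBlocks₁₂ = 0 := by
    change M.toBlocks₂₁ * -J * M.toBlocks₁₂ = 0
    ext i j
    simp [M, e, J, bordered, toBlocks₁₂, toBlocks₂₁, mul_apply, Fintype.sum_sum_type]
  rw [← det_reindex_self e]
  change M.det = D.det
  rw [hM, det_fromBlocks₁₁, hSchur, sub_zero, det_fromBlocks_zero_neg_one_one_zero, one_mul]

end Matrix

section Counting

variable (F : Type*) [Field F] [Fintype F]

open Classical in
noncomputable def nondegAlt (ι : Type*) [Fintype ι] [DecidableEq ι] : Finset (Matrix ι ι F) :=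
  {A | A.IsAlt ∧ IsUnit A}

variable {F} {ι κ μ : Type*} [Fintype ι] [DecidableEq ι] [Fintype κ] [DecidableEq κ]
  [Fintype μ] [DecidableEq μ]

@[simp] theorem mem_nondegAlt {A : Matrix ι ι F} : A ∈ nondegAlt F ι ↔ A.IsAlt ∧ IsUnit A := by
  simp [nondegAlt]

theorem card_nondegAlt_congr (e : ι ≃ κ) : #(nondegAlt F ι) = #(nondegAlt F κ) := by
  refine card_equiv (reindex e e) fun A => ?_
  simp only [mem_nondegAlt, isUnit_iff_isUnit_det, reindex_apply, det_submatrix_equiv_self]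
  refine and_congr_left' ⟨fun hA => hA.submatrix _, fun hA => ?_⟩
  simpa using hA.submatrix e

theorem card_nondegAlt_fiber_le [DecidableEq F] {b b' : κ → F} (hb : b ≠ 0) (hb' : b' ≠ 0) :
    #{A ∈ nondegAlt F (Fin 1 ⊕ κ) | A.border = b} ≤
      #{A ∈ nondegAlt F (Fin 1 ⊕ κ) | A.border = b'} := by
  obtain ⟨Q, hQ, hQb⟩ := exists_isUnit_mulVec_eq hb hb'
  set P : Matrix (Fin 1 ⊕ κ) (Fin 1 ⊕ κ) F := fromBlocks 1 0 0 Q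
  have hP : IsUnit P := by
    simpa [P, isUnit_iff_isUnit_det, det_fromBlocks_zero₂₁] using hQ
  refine card_le_card_of_injOn (fun A => P * A * Pᵀ) (fun A hA => ?_) (fun A _ A' _ h => ?_)
  · simp only [coe_filter, mem_nondegAlt, Set.mem_ofPred_eq] at hA ⊢
    exact ⟨⟨hA.1.1.mul_mul_transpose P, (hP.mul hA.1.2).mul (P.isUnit_transpose.2 hP)⟩,
      by rw [border_mul_mul_transpose, hA.2, hQb]⟩
  · simpa using (hP.mul_left_cancel ((P.isUnit_transpose.2 hP).mul_right_cancel h) :)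

theorem card_nondegAlt_fiber_single [DecidableEq F] :
    #{A ∈ nondegAlt F (Fin 1 ⊕ (Fin 1 ⊕ μ)) | A.border = Pi.single (.inl 0) 1} =
      Fintype.card F ^ Fintype.card μ * #(nondegAlt F μ) := by
  have hunit (c : μ → F) (D : Matrix μ μ F) :
      IsUnit (bordered (Pi.single (.inl 0) 1) (bordered c D)) ↔ IsUnit D := by
    rw [isUnit_iff_isUnit_det, det_bordered_single_bordered, isUnit_iff_isUnit_det]
  have hsplit {A : Matrix (Fin 1 ⊕ (Fin 1 ⊕ μ)) (Fin 1 ⊕ (Fin 1 ⊕ μ)) F} (hA : A.IsAlt) :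
      bordered A.border (bordered (A.submatrix .inr .inr).border
        ((A.submatrix .inr .inr).submatrix .inr .inr)) = A := by
    rw [(hA.submatrix _).bordered_border, hA.bordered_border]
  rw [← Fintype.card_fun, ← card_univ, ← card_product]
  refine card_nbij'
    (fun A => ((A.submatrix .inr .inr).border, (A.submatrix .inr .inr).submatrix .inr .inr))
    (fun p => bordered (Pi.single (.inl 0) 1) (bordered p.1 p.2)) (fun A hA => ?_)
    (fun p hp => ?_) (fun A hA => ?_) (fun p _ => rfl)
  · simp only [coe_filter, mem_nondegAlt, Set.mem_ofPred_eq] at hA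
    simp only [coe_product, coe_univ, Set.mem_prod, Set.mem_univ, mem_coe, mem_nondegAlt,
      true_and]
    refine ⟨(hA.1.1.submatrix _).submatrix _, (hunit (A.submatrix .inr .inr).border _).1 ?_⟩
    rw [← hA.2, hsplit hA.1.1]
    exact hA.1.2
  · simp only [coe_product, coe_univ, Set.mem_prod, Set.mem_univ, mem_coe, mem_nondegAlt,
      true_and] at hp
    simp only [coe_filter, mem_nondegAlt, Set.mem_ofPred_eq]
    exact ⟨⟨isAlt_bordered (isAlt_bordered hp.1 _) _, (hunit _ _).2 hp.2⟩, rfl⟩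
  · simp only [coe_filter, mem_nondegAlt, Set.mem_ofPred_eq] at hA
    rw [← hA.2]
    exact hsplit hA.1.1

theorem card_nondegAlt_fin_one_sum_fin_one_sum :
    #(nondegAlt F (Fin 1 ⊕ (Fin 1 ⊕ μ))) =
      (Fintype.card F ^ (Fintype.card μ + 1) - 1) *
        (Fintype.card F ^ Fintype.card μ * #(nondegAlt F μ)) := by
  classical
  have hsingle : (Pi.single (.inl 0) 1 : Fin 1 ⊕ μ → F) ≠ 0 := by simp
  have hfiber (b : Fin 1 ⊕ μ → F) (hb : b ∈ ({b | b ≠ 0} : Finset _)) :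
      #{A ∈ nondegAlt F (Fin 1 ⊕ (Fin 1 ⊕ μ)) | A.border = b} =
        #{A ∈ nondegAlt F (Fin 1 ⊕ (Fin 1 ⊕ μ)) | A.border = Pi.single (.inl 0) 1} := by
    rw [mem_filter_univ] at hb
    exact (card_nondegAlt_fiber_le hb hsingle).antisymm (card_nondegAlt_fiber_le hsingle hb)
  rw [card_eq_sum_card_fiberwise (t := {b | b ≠ 0}) fun A hA => (mem_filter_univ _).2
      ((mem_nondegAlt.1 hA).1.border_ne_zero (mem_nondegAlt.1 hA).2),
    sum_congr rfl hfiber, sum_const, card_nondegAlt_fiber_single, smul_eq_mul, filter_ne',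
    card_erase_of_mem (mem_univ _), card_univ, Fintype.card_fun, Fintype.card_sum,
    Fintype.card_fin, add_comm 1]

theorem card_nondegAlt_fin_zero : #(nondegAlt F (Fin 0)) = 1 :=
  card_eq_one.2 ⟨1, eq_singleton_iff_unique_mem.2
    ⟨mem_nondegAlt.2 ⟨⟨Subsingleton.elim _ _, finZeroElim⟩, isUnit_one⟩,
      fun _ _ => Subsingleton.elim _ _⟩⟩

theorem card_nondegAlt_fin_add_two (m : ℕ) :
    #(nondegAlt F (Fin (m + 2))) =
      (Fintype.card F ^ (m + 1) - 1) * (Fintype.card F ^ m * #(nondegAlt F (Fin m))) := by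
  rw [card_nondegAlt_congr ((finCongr (by omega)).trans (finSumFinEquiv.symm.trans
      (Equiv.sumCongr (.refl (Fin 1)) (finSumFinEquiv (m := 1) (n := m)).symm))),
    card_nondegAlt_fin_one_sum_fin_one_sum, Fintype.card_fin]

theorem card_nondegAlt_fin_two_mul (m : ℕ) :
    #(nondegAlt F (Fin (2 * m))) = Fintype.card F ^ (m * (m - 1)) *
      ∏ i ∈ range m, (Fintype.card F ^ (2 * i + 1) - 1) := by
  induction m with
  | zero => exact card_nondegAlt_fin_zero
  | succ m ih =>
    have hexp : (m + 1) * (m + 1 - 1) = m * (m - 1) + 2 * m := by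
      rcases m with _ | m
      · rfl
      · simp only [Nat.add_sub_cancel]; ring
    rw [mul_add_one, card_nondegAlt_fin_add_two, ih, prod_range_succ, hexp, pow_add]
    ring

end Counting

theorem card_full_rank_alternating_matrices_general {q n : ℕ} (heven : Even n)
    {F : Type*} [Field F] [Fintype F] (hF : Fintype.card F = q) :
    Set.ncard {A : Matrix (Fin n) (Fin n) F |
        Matrix.transpose A = -A ∧ (∀ i, A i i = 0) ∧ A.rank = n} =
      q ^ (n * (n - 2) / 4) * ∏ i ∈ Finset.range (n / 2), (q ^ (2 * i + 1) - 1) := by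
  obtain ⟨m, rfl⟩ := heven
  subst hF
  have hset : {A : Matrix (Fin (m + m)) (Fin (m + m)) F |
      Aᵀ = -A ∧ (∀ i, A i i = 0) ∧ A.rank = m + m} = nondegAlt F (Fin (m + m)) := by
    ext A
    simp [IsAlt, and_assoc, ← rank_eq_card_iff_isUnit]
  have hexp : (m + m) * (m + m - 2) / 4 = m * (m - 1) := by
    apply Nat.div_eq_of_eq_mul_left (by norm_num)
    rw [show m + m - 2 = 2 * (m - 1) by omega]
    ring
  rw [hset, Set.ncard_coe_finset, hexp, ← two_mul, card_nondegAlt_fin_two_mul,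
    Nat.mul_div_cancel_left _ two_pos]

/-- For `n` even, the number of `n × n` skew-symmetric (alternating) matrices over `GF(q)`
of full rank `n` equals `q^(n(n-2)/4) ⋅ ∏_{i=0}^{(n-2)/2} (q^(2i+1) - 1)`. -/
theorem card_full_rank_alternating_matrices {q n : ℕ} (hn : 2 ≤ n) (heven : Even n)
    {F : Type*} [Field F] [Fintype F] (hF : Fintype.card F = q) :
    Set.ncard {A : Matrix (Fin n) (Fin n) F |
        Matrix.transpose A = -A ∧ (∀ i, A i i = 0) ∧ A.rank = n} =
      q ^ (n * (n - 2) / 4) * ∏ i ∈ Finset.range (n / 2), (q ^ (2 * i + 1) - 1) :=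
  card_full_rank_alternating_matrices_general heven hF
end

section
/- A maximum constant-rank code has size at most the given bound: any subset C of M_{m×n}(q) in which every matrix has rank exactly r and any two distinct matrices A, B satisfy rank(A - B) ≥ d satisfies |C| ≤ [n choose r]_q · ∏_{i=0}^{r-d} (q^m - q^i), where [n choose r]_q is the Gaussian binomial coefficient. -/
/-!
Send a matrix `A` of rank `r` to its row space together with the images under `A` of
`k = r - d + 1` vectors chosen, once for each possible kernel, linearly independent modulo that
kernel. The row space determines the kernel, so if two codewords `A ≠ B` had the same image, then
`A - B` would vanish on the kernel and on `k` further independent vectors, forcing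
`rank (A - B) ≤ r - k < d`. The image is an `r`-dimensional subspace of `F^n` together with a
linearly independent `k`-tuple in `F^m`, and the latter are counted by `card_linearIndependent`.
-/

open Module Submodule LinearMap

section Quotient

variable {K V W : Type*} [Field K] [AddCommGroup V] [Module K V] [AddCommGroup W] [Module K W]

theorem exists_linearIndependent_mkQ_of_le_finrank (p : Submodule K V) {k : ℕ}
    (hk : k ≤ finrank K (V ⧸ p)) : ∃ v : Fin k → V, LinearIndependent K (p.mkQ ∘ v) := by
  obtain ⟨u, hu⟩ := exists_linearIndependent_of_le_finrank hk
  choose v hv using fun i => p.mkQ_surjective (u i)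
  exact ⟨v, by rwa [show p.mkQ ∘ v = u from funext hv]⟩

theorem LinearIndependent.map_of_mkQ_ker {ι : Type*} {f : V →ₗ[K] W} {v : ι → V}
    (hv : LinearIndependent K ((ker f).mkQ ∘ v)) : LinearIndependent K (f ∘ v) :=
  hv.map' _ (ker_liftQ_eq_bot' _ f rfl)

theorem finrank_range_sub_add_card_le [FiniteDimensional K V] {f g : V →ₗ[K] W}
    (hker : ker f ≤ ker g) {ι : Type*} [Fintype ι] {v : ι → V}
    (hv : LinearIndependent K ((ker f).mkQ ∘ v)) (hfg : ∀ i, f (v i) = g (v i)) :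
    finrank K (range (f - g)) + Fintype.card ι ≤ finrank K (range f) := by
  have hle : ker f ≤ ker (f - g) := fun x hx => by
    simp [mem_ker.1 hx, mem_ker.1 (hker hx)]
  set h := (ker f).liftQ (f - g) hle
  have hspan : span K (Set.range ((ker f).mkQ ∘ v)) ≤ ker h :=
    span_le.2 <| Set.range_subset_iff.2 fun i => by simp [h, hfg]
  calc finrank K (range (f - g)) + Fintype.card ι
      = finrank K (range h) + finrank K (span K (Set.range ((ker f).mkQ ∘ v))) := by
        rw [range_liftQ, finrank_span_eq_card hv]
    _ ≤ finrank K (range h) + finrank K (ker h) := by grw [finrank_mono hspan]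
    _ = finrank K (V ⧸ ker f) := h.finrank_range_add_finrank_ker
    _ = finrank K (range f) := f.quotKerEquivRange.finrank_eq

end Quotient

namespace Matrix

variable {m n : Type*} [Fintype n] {K : Type*} [Field K]

theorem finrank_quotient_ker_mulVecLin (A : Matrix m n K) :
    finrank K ((n → K) ⧸ ker A.mulVecLin) = A.rank :=
  A.mulVecLin.quotKerEquivRange.finrank_eq

variable [Fintype m]

theorem mem_ker_mulVecLin_iff {R : Type*} [CommRing R] (A : Matrix m n R) (x : n → R) :
    x ∈ ker A.mulVecLin ↔ ∀ y ∈ range Aᵀ.mulVecLin, y ⬝ᵥ x = 0 := by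
  simp only [mem_ker, mem_range, mulVecLin_apply, forall_exists_index,
    forall_apply_eq_imp_iff, mulVec_transpose, ← dotProduct_mulVec]
  simp only [dotProduct_comm _ (A *ᵥ x), dotProduct_eq_zero_iff]

theorem ker_mulVecLin_eq_of_range_transpose_eq {R : Type*} [CommRing R] {A B : Matrix m n R}
    (h : range Aᵀ.mulVecLin = range Bᵀ.mulVecLin) : ker A.mulVecLin = ker B.mulVecLin := by
  ext x
  simp only [mem_ker_mulVecLin_iff, h]

theorem rank_sub_add_le {A B : Matrix m n K} (hrow : range Aᵀ.mulVecLin = range Bᵀ.mulVecLin)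
    {k : ℕ} {v : Fin k → n → K} (hv : LinearIndependent K ((ker A.mulVecLin).mkQ ∘ v))
    (hAB : ∀ i, A *ᵥ v i = B *ᵥ v i) : (A - B).rank + k ≤ A.rank := by
  have hsub : (A - B).mulVecLin = A.mulVecLin - B.mulVecLin := LinearMap.ext (sub_mulVec A B)
  rw [rank, rank, hsub]
  simpa only [Fintype.card_fin] using
    finrank_range_sub_add_card_le (ker_mulVecLin_eq_of_range_transpose_eq hrow).le hv hAB

end Matrix

theorem ncard_setOf_linearIndependent {F : Type*} [Field F] [Fintype F] {k m : ℕ} (hk : k ≤ m) :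
    {w : Fin k → Fin m → F | LinearIndependent F w}.ncard =
      ∏ i ∈ Finset.range k, (Fintype.card F ^ m - Fintype.card F ^ i) := by
  have := card_linearIndependent (K := F) (V := Fin m → F) (k := k) (by simpa using hk)
  rw [Module.finrank_fin_fun] at this
  rw [← Nat.card_coe_set_eq, ← Fin.prod_univ_eq_prod_range]
  exact this

open Matrix in
theorem constant_rank_code_bound_general {q m n d r : ℕ} (hd : 1 ≤ d) (hdr : d ≤ r)
    (hrm : r ≤ m)
    {F : Type*} [Field F] [Fintype F] (hF : Fintype.card F = q)
    (C : Set (Matrix (Fin m) (Fin n) F))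
    (hrank : ∀ A ∈ C, A.rank = r)
    (hdist : ∀ A ∈ C, ∀ B ∈ C, A ≠ B → d ≤ (A - B).rank) :
    C.ncard ≤ Set.ncard {W : Submodule F (Fin n → F) | finrank F W = r} *
      ∏ i ∈ Finset.range (r - d + 1), (q ^ m - q ^ i) := by
  set k := r - d + 1
  choose! v hv using fun (p : Submodule F (Fin n → F)) (hp : k ≤ finrank F ((Fin n → F) ⧸ p)) =>
    exists_linearIndependent_mkQ_of_le_finrank p hp
  have hvA : ∀ A ∈ C, LinearIndependent F ((ker A.mulVecLin).mkQ ∘ v (ker A.mulVecLin)) :=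
    fun A hA => hv _ (by rw [finrank_quotient_ker_mulVecLin, hrank A hA]; omega)
  let Φ (A : Matrix (Fin m) (Fin n) F) := (range Aᵀ.mulVecLin, A.mulVecLin ∘ v (ker A.mulVecLin))
  have hmaps : ∀ A ∈ C, Φ A ∈ {W : Submodule F (Fin n → F) | finrank F W = r} ×ˢ
      {w : Fin k → Fin m → F | LinearIndependent F w} := fun A hA =>
    ⟨(rank_transpose A).trans (hrank A hA), (hvA A hA).map_of_mkQ_ker⟩
  have hinj : Set.InjOn Φ C := by
    intro A hA B hB hAB
    simp only [Φ, Prod.mk.injEq] at hAB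
    obtain ⟨hrow, hval⟩ := hAB
    rw [← ker_mulVecLin_eq_of_range_transpose_eq hrow] at hval
    by_contra hne
    have hclose := rank_sub_add_le hrow (hvA A hA) (congrFun hval)
    have hfar := hdist A hA B hB hne
    have hrA := hrank A hA
    omega
  calc C.ncard ≤ _ := Set.ncard_le_ncard_of_injOn Φ hmaps hinj
    _ = _ := by rw [Set.ncard_prod, ncard_setOf_linearIndependent (by omega), hF]

/-- Bound on constant-rank codes: if every matrix of `C ⊆ M_{m×n}(q)` has rank exactly `r`
and any two distinct members are at rank distance at least `d` (`1 ≤ d ≤ r ≤ min(m,n)`),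
then `|C| ≤ [n choose r]_q ⋅ ∏_{i=0}^{r-d} (q^m - q^i)`, where the Gaussian binomial
coefficient `[n choose r]_q` is the number of `r`-dimensional subspaces of `GF(q)^n`. -/
theorem constant_rank_code_bound {q m n d r : ℕ} (hd : 1 ≤ d) (hdr : d ≤ r)
    (hrm : r ≤ m) (hrn : r ≤ n)
    {F : Type*} [Field F] [Fintype F] (hF : Fintype.card F = q)
    (C : Set (Matrix (Fin m) (Fin n) F))
    (hrank : ∀ A ∈ C, A.rank = r)
    (hdist : ∀ A ∈ C, ∀ B ∈ C, A ≠ B → d ≤ (A - B).rank) :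
    C.ncard ≤ Set.ncard {W : Submodule F (Fin n → F) | finrank F W = r} *
      ∏ i ∈ Finset.range (r - d + 1), (q ^ m - q ^ i) :=
  constant_rank_code_bound_general hd hdr hrm hF C hrank hdist
end
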